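/- For every positive integer μ and every s ≥ 2 sufficiently large, there exist infinitely many m such that some permutation w of 1^m 2^m ⋯ s^m has multiplicity μ(w) ≥ μ, i.e., at least μ distinct permutations (up to reversal) of w share the same continuant value K(w). -/

import Mathlib

/-- The regular continuant of a finite word of positive integers. -/
def K : List ℕ → ℕ
  | [] => 1
  | [a] => a
  | a :: b :: t => a * K (b :: t) + K t

/-- The equipartitioned word `1^m 2^m ⋯ s^m`. -/
def eqWord (s m : ℕ) : List ℕ := (List.range s).flatMap (fun i => List.replicate m (i + 1))

/-- The set of permutations of `w`, with each word identified with its reversal. -/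
def classes (w : List ℕ) : Finset (Finset (List ℕ)) :=
  w.permutations.toFinset.image (fun u => ({u, u.reverse} : Finset (List ℕ)))

/-- The multiplicity `μ(w)`: the number of permutations of `w` (up to reversal)
whose continuant equals `K w`. -/
def mult (w : List ℕ) : ℕ :=
  ((classes w).filter (fun c => ∃ u ∈ c, K u = K w)).card

/-! ### Auxiliary lemmas -/

lemma K_le_prod (l : List ℕ) : K l ≤ (l.map (· + 1)).prod := by
  induction l using K.induct with
  | case1 => simp [K]
  | case2 a => simp [K]
  | case3 a b t ih1 ih2 =>
    have h2 : K t ≤ ((b :: t).map (· + 1)).prod := by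
      refine ih2.trans ?_
      simp only [List.map_cons, List.prod_cons]
      exact Nat.le_mul_of_pos_left _ (by positivity)
    simp only [K, List.map_cons, List.prod_cons] at *
    calc a * K (b :: t) + K t ≤ a * ((b+1) * (List.map (· + 1) t).prod)
          + (b+1) * (List.map (· + 1) t).prod := by
          exact Nat.add_le_add (Nat.mul_le_mul_left a ih1) h2
      _ = (a+1) * ((b+1) * (List.map (· + 1) t).prod) := by ring

lemma eqWord_succ (s m : ℕ) : eqWord (s+1) m = eqWord s m ++ List.replicate m (s + 1) := by
  simp [eqWord, List.range_succ]

lemma eqWord_prod (s m : ℕ) :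
    ((eqWord s m).map (· + 1)).prod = ((s+1).factorial) ^ m := by
  induction s with
  | zero => simp [eqWord]
  | succ s ih =>
    rw [eqWord_succ, List.map_append, List.prod_append, ih]
    rw [List.map_replicate, List.prod_replicate, Nat.factorial_succ (s+1), ← Nat.mul_pow]
    ring_nf

/-- the word obtained by permuting positions of `eqWord s m` -/
def wordOf (s m : ℕ) (σ : Equiv.Perm (Fin (s*m))) : List ℕ :=
  List.ofFn (fun j : Fin (s*m) => ((σ j : ℕ) / m) + 1)

lemma wordOf_one (s m : ℕ) (hm : 0 < m) : wordOf s m 1 = eqWord s m := by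
  induction s with
  | zero => simp [wordOf, eqWord]
  | succ s ih =>
    rw [eqWord_succ, ← ih]
    unfold wordOf
    simp only [Equiv.Perm.one_apply]
    rw [List.ofFn_congr (show (s+1)*m = s*m + m by ring), List.ofFn_add]
    congr 1
    apply List.eq_replicate_iff.mpr
    refine ⟨by simp, ?_⟩
    intro b hb
    simp only [List.mem_ofFn] at hb
    obtain ⟨j, hj⟩ := hb
    simp only [Fin.coe_cast, Fin.coe_natAdd] at hj
    rw [show s*m + (j:ℕ) = m*s + (j:ℕ) by ring, Nat.mul_add_div hm,
      Nat.div_eq_of_lt j.2] at hj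
    omega

lemma wordOf_perm (s m : ℕ) (hm : 0 < m) (σ : Equiv.Perm (Fin (s*m))) :
    (wordOf s m σ).Perm (eqWord s m) := by
  rw [← wordOf_one s m hm]
  unfold wordOf
  rw [List.ofFn_eq_map, List.ofFn_eq_map]
  have h1 : (List.finRange (s*m)).map σ |>.Perm (List.finRange (s*m)) := by
    apply List.perm_of_nodup_nodup_toFinset_eq
    · exact (List.nodup_finRange _).map σ.injective
    · exact List.nodup_finRange _
    · apply Finset.eq_of_subset_of_card_le
      · intro x _; simp [List.mem_toFinset]
      · rw [List.toFinset_card_of_nodup ((List.nodup_finRange _).map σ.injective),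
          List.toFinset_card_of_nodup (List.nodup_finRange _)]
        simp
  have := h1.map (fun j : Fin (s*m) => ((j : ℕ) / m) + 1)
  rw [List.map_map] at this
  simpa [Function.comp_def] using this

lemma fiber_card {s m : ℕ} (hm : 0 < m) (σ₀ : Equiv.Perm (Fin (s*m))) :
    (Finset.univ.filter (fun σ : Equiv.Perm (Fin (s*m)) => wordOf s m σ = wordOf s m σ₀)).card
      ≤ m.factorial ^ s := by
  classical
  have hlt : ∀ (i : Fin s) (k : Fin m), (i:ℕ)*m + (k:ℕ) < s*m := by
    intro i k
    calc (i:ℕ)*m + (k:ℕ) < (i:ℕ)*m + m := by omega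
      _ = ((i:ℕ)+1)*m := by ring
      _ ≤ s*m := Nat.mul_le_mul_right m i.2
  have hdiv : ∀ (i : Fin s) (k : Fin m), ((i:ℕ)*m + (k:ℕ))/m = i := by
    intro i k
    rw [show (i:ℕ)*m + (k:ℕ) = m*(i:ℕ) + (k:ℕ) by ring, Nat.mul_add_div hm,
      Nat.div_eq_of_lt k.2]
    omega
  set P : Equiv.Perm (Fin (s*m)) → Prop :=
    fun σ => ∀ j : Fin (s*m), ((σ (σ₀.symm j) : ℕ))/m = (j:ℕ)/m with hP
  have key : ∀ σ, wordOf s m σ = wordOf s m σ₀ → P σ := by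
    intro σ h j
    have h1 := List.ofFn_inj.mp h
    have h2 := congrFun h1 (σ₀.symm j)
    have h3 : ((σ (σ₀.symm j) : ℕ))/m = ((σ₀ (σ₀.symm j) : ℕ))/m := by omega
    rwa [Equiv.apply_symm_apply] at h3
  have decomp : ∀ (σ : Equiv.Perm (Fin (s*m))), P σ → ∀ (i : Fin s) (k : Fin m),
      (σ (σ₀.symm ⟨(i:ℕ)*m + (k:ℕ), hlt i k⟩) : ℕ)
        = m * (i:ℕ) + (σ (σ₀.symm ⟨(i:ℕ)*m + (k:ℕ), hlt i k⟩) : ℕ) % m := by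
    intro σ h i k
    have e1 : (σ (σ₀.symm ⟨(i:ℕ)*m + (k:ℕ), hlt i k⟩) : ℕ)/m = i := by
      rw [h ⟨(i:ℕ)*m + (k:ℕ), hlt i k⟩]; exact hdiv i k
    conv_lhs => rw [← Nat.div_add_mod (σ (σ₀.symm ⟨(i:ℕ)*m + (k:ℕ), hlt i k⟩) : ℕ) m, e1]
  set f : Equiv.Perm (Fin (s*m)) → (Fin s → (Fin m ↪ Fin m)) := fun σ =>
    if h : P σ then
      fun i => ⟨fun k => ⟨(σ (σ₀.symm ⟨(i:ℕ)*m + (k:ℕ), hlt i k⟩) : ℕ) % m,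
          Nat.mod_lt _ hm⟩, by
        intro k k' hkk
        have hmod := congrArg (fun x : Fin m => (x:ℕ)) hkk
        simp only at hmod
        have d1 := decomp σ h i k
        have d2 := decomp σ h i k'
        have hv : (σ (σ₀.symm ⟨(i:ℕ)*m + (k:ℕ), hlt i k⟩) : ℕ)
            = (σ (σ₀.symm ⟨(i:ℕ)*m + (k':ℕ), hlt i k'⟩) : ℕ) := by omega
        have h5 := σ₀.symm.injective (σ.injective (Fin.ext hv))
        have h6 := congrArg Fin.val h5
        simp only at h6
        exact Fin.ext (by omega)⟩
    else fun _ => Function.Embedding.refl _ with hf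
  have hinj : Set.InjOn f
      (Finset.univ.filter (fun σ : Equiv.Perm (Fin (s*m)) => wordOf s m σ = wordOf s m σ₀)) := by
    intro σ hσ σ' hσ' hff
    simp only [Finset.coe_filter, Set.mem_setOf_eq, Finset.mem_univ, true_and] at hσ hσ'
    have pσ := key _ hσ
    have pσ' := key _ hσ'
    rw [hf] at hff
    simp only [dif_pos pσ, dif_pos pσ'] at hff
    have hval : ∀ j : Fin (s*m), σ (σ₀.symm j) = σ' (σ₀.symm j) := by
      intro j
      have hi : (j:ℕ)/m < s := Nat.div_lt_of_lt_mul (Nat.mul_comm s m ▸ j.2)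
      have hk : (j:ℕ) % m < m := Nat.mod_lt _ hm
      have hjeq : (⟨((⟨(j:ℕ)/m, hi⟩ : Fin s):ℕ)*m + ((⟨(j:ℕ)%m, hk⟩ : Fin m):ℕ),
          hlt ⟨(j:ℕ)/m, hi⟩ ⟨(j:ℕ)%m, hk⟩⟩ : Fin (s*m)) = j := by
        apply Fin.ext
        simp only
        rw [Nat.mul_comm]
        exact Nat.div_add_mod _ _
      have hcong := congrFun hff ⟨(j:ℕ)/m, hi⟩
      have h2 : (σ (σ₀.symm ⟨((⟨(j:ℕ)/m, hi⟩ : Fin s):ℕ)*m + ((⟨(j:ℕ)%m, hk⟩ : Fin m):ℕ),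
          hlt ⟨(j:ℕ)/m, hi⟩ ⟨(j:ℕ)%m, hk⟩⟩) : ℕ) % m
          = (σ' (σ₀.symm ⟨((⟨(j:ℕ)/m, hi⟩ : Fin s):ℕ)*m + ((⟨(j:ℕ)%m, hk⟩ : Fin m):ℕ),
          hlt ⟨(j:ℕ)/m, hi⟩ ⟨(j:ℕ)%m, hk⟩⟩) : ℕ) % m :=
        congrArg (fun e : Fin m ↪ Fin m => ((e ⟨(j:ℕ)%m, hk⟩ : Fin m) : ℕ)) hcong
      rw [hjeq] at h2
      have d1 := decomp σ pσ ⟨(j:ℕ)/m, hi⟩ ⟨(j:ℕ)%m, hk⟩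
      have d2 := decomp σ' pσ' ⟨(j:ℕ)/m, hi⟩ ⟨(j:ℕ)%m, hk⟩
      rw [hjeq] at d1 d2
      exact Fin.ext (by omega)
    apply Equiv.ext
    intro x
    have hx := hval (σ₀ x)
    rwa [Equiv.symm_apply_apply] at hx
  calc (Finset.univ.filter (fun σ : Equiv.Perm (Fin (s*m)) => wordOf s m σ = wordOf s m σ₀)).card
      ≤ Fintype.card (Fin s → (Fin m ↪ Fin m)) := by
        have := Finset.card_le_card_of_injOn f (fun a _ => Finset.mem_univ (f a)) hinj
        simpa using this
    _ = m.factorial ^ s := by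
        rw [Fintype.card_fun, Fintype.card_embedding_eq]
        simp [Nat.descFactorial_self]

/-! ### Arithmetic lemmas -/

lemma bern (a n : ℕ) : a^n * (n + a) ≤ (a+1)^n * a := by
  induction n with
  | zero => simp
  | succ n ih =>
    calc a^(n+1) * (n+1+a) = a^n * (a*(n+1+a)) := by ring
      _ ≤ a^n * ((n+a)*(a+1)) := Nat.mul_le_mul_left _ (by nlinarith)
      _ = (a^n * (n+a)) * (a+1) := by ring
      _ ≤ ((a+1)^n * a) * (a+1) := Nat.mul_le_mul_right _ ih
      _ = (a+1)^(n+1) * a := by ring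

lemma two_pow_le (a : ℕ) (ha : 1 ≤ a) : 2 * a^(a+1) ≤ (a+1)^(a+1) := by
  have h := bern a (a+1)
  have h2 : 2*a^(a+1)*a ≤ a^(a+1)*(a+1+a) := by
    calc 2*a^(a+1)*a = a^(a+1)*(2*a) := by ring
      _ ≤ a^(a+1)*(a+1+a) := Nat.mul_le_mul_left _ (by omega)
  have h3 : 2*a^(a+1)*a ≤ (a+1)^(a+1)*a := le_trans h2 h
  exact Nat.le_of_mul_le_mul_right h3 ha

/-- `2 (a+2)! ≤ a^(a+1)` for `a ≥ 5`. -/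
lemma fact_lt_pow : ∀ a : ℕ, 5 ≤ a → 2 * (a+2).factorial ≤ a^(a+1) := by
  intro a ha
  induction a with
  | zero => omega
  | succ a ih =>
    rcases Nat.lt_or_ge a 5 with h | h
    · interval_cases a
      · omega
      · omega
      · omega
      · omega
      · decide
    · have ih2 := ih h
      have key : (a+3) * a^(a+1) ≤ (a+1)^(a+2) := by
        have h1 := two_pow_le a (by omega)
        calc (a+3) * a^(a+1) ≤ (2*(a+1)) * a^(a+1) := Nat.mul_le_mul_right _ (by omega)
          _ = (a+1) * (2 * a^(a+1)) := by ring
          _ ≤ (a+1) * (a+1)^(a+1) := Nat.mul_le_mul_left _ h1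
          _ = (a+1)^(a+2) := by ring
      calc 2 * (a+3).factorial = (a+3) * (2 * (a+2).factorial) := by
            rw [Nat.factorial_succ]; ring
        _ ≤ (a+3) * a^(a+1) := Nat.mul_le_mul_left _ ih2
        _ ≤ (a+1)^(a+2) := key

lemma fact_run (a b : ℕ) (h : b ≤ a + 1) : ∀ k, a.factorial * b^k ≤ (a+k).factorial := by
  intro k
  induction k with
  | zero => simp
  | succ k ih =>
    calc a.factorial * b^(k+1) = (a.factorial * b^k) * b := by ring
      _ ≤ (a+k).factorial * (a+k+1) := Nat.mul_le_mul ih (by omega)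
      _ = (a+(k+1)).factorial := by rw [show a+(k+1) = (a+k)+1 by ring, Nat.factorial_succ]; ring

lemma growth (s : ℕ) (hs : 6 ≤ s) : ∀ m, s ≤ m →
    (m.factorial)^s * ((s+1).factorial)^m * 2^m
      ≤ (s*m).factorial * ((s.factorial)^s * ((s+1).factorial)^s * 2^s) := by
  intro m hm
  induction m, hm using Nat.le_induction with
  | base => exact Nat.le_mul_of_pos_left _ (Nat.factorial_pos _)
  | succ m hm ih =>
    obtain ⟨a, rfl⟩ : ∃ a, s = a + 1 := ⟨s - 1, by omega⟩
    have ha : 5 ≤ a := by omega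
    have step : ((m+1)^(a+1) * (a+2).factorial * 2) * ((a+1)*m).factorial
        ≤ ((a+1)*(m+1)).factorial := by
      have hb : a*(m+1) ≤ (a+1)*m + 1 := by nlinarith
      have h1 := fact_run ((a+1)*m) (a*(m+1)) hb (a+1)
      have h2 : (2 * (a+2).factorial) * (m+1)^(a+1) ≤ (a*(m+1))^(a+1) := by
        rw [mul_pow]
        exact Nat.mul_le_mul_right _ (fact_lt_pow a ha)
      calc ((m+1)^(a+1) * (a+2).factorial * 2) * ((a+1)*m).factorial
          = ((2 * (a+2).factorial) * (m+1)^(a+1)) * ((a+1)*m).factorial := by ring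
        _ ≤ (a*(m+1))^(a+1) * ((a+1)*m).factorial := Nat.mul_le_mul_right _ h2
        _ = ((a+1)*m).factorial * (a*(m+1))^(a+1) := by ring
        _ ≤ ((a+1)*m + (a+1)).factorial := h1
        _ = ((a+1)*(m+1)).factorial := by ring_nf
    calc ((m+1).factorial)^(a+1) * ((a+1+1).factorial)^(m+1) * 2^(m+1)
        = ((m+1)^(a+1) * (a+2).factorial * 2) *
            ((m.factorial)^(a+1) * ((a+1+1).factorial)^m * 2^m) := by
          rw [Nat.factorial_succ, mul_pow]
          ring
      _ ≤ ((m+1)^(a+1) * (a+2).factorial * 2) *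
            (((a+1)*m).factorial * (((a+1).factorial)^(a+1) * ((a+1+1).factorial)^(a+1) * 2^(a+1))) := by
          exact Nat.mul_le_mul_left _ ih
      _ = (((m+1)^(a+1) * (a+2).factorial * 2) * ((a+1)*m).factorial) *
            (((a+1).factorial)^(a+1) * ((a+1+1).factorial)^(a+1) * 2^(a+1)) := by ring
      _ ≤ ((a+1)*(m+1)).factorial *
            (((a+1).factorial)^(a+1) * ((a+1+1).factorial)^(a+1) * 2^(a+1)) := by
          exact Nat.mul_le_mul_right _ step

/-! ### Main theorem -/

/-- For every `μ ≥ 1` and every sufficiently large `s`, there are infinitely many `m`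
such that some permutation of `1^m 2^m ⋯ s^m` has multiplicity at least `μ`. -/
theorem infinitely_many_high_multiplicity (μ : ℕ) (hμ : 1 ≤ μ) :
    ∃ s₀ : ℕ, 2 ≤ s₀ ∧ ∀ s : ℕ, s₀ ≤ s →
      {m : ℕ | ∃ w : List ℕ, w.Perm (eqWord s m) ∧ μ ≤ mult w}.Infinite := by
  classical
  refine ⟨6, by norm_num, fun s hs => ?_⟩
  set C : ℕ := (s.factorial)^s * ((s+1).factorial)^s * 2^s with hC
  have hCpos : 0 < C := by positivity
  set A : ℕ := max s (8*μ*C) with hA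
  apply (Set.Ici_infinite A).mono
  intro m hmA
  simp only [Set.mem_Ici] at hmA
  have hms : s ≤ m := le_trans (le_max_left _ _) hmA
  have hm : 0 < m := by omega
  set V : ℕ := ((s+1).factorial)^m with hV
  have hVpos : 0 < V := by positivity
  set X : ℕ := (m.factorial)^s with hX
  have hXpos : 0 < X := by positivity
  -- Step 1 : counting inequality
  have hcount : X * ((V+1) * (2*μ-1)) < (s*m).factorial := by
    have h2m : 8*μ*C + 1 ≤ 2^m := by
      have := @Nat.lt_two_pow_self m
      have : 8*μ*C ≤ m := le_trans (le_max_right _ _) hmA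
      omega
    have hmain : X * V * 2^m ≤ (s*m).factorial * C := growth s hs m hms
    have hmid : ((V+1) * (2*μ-1)) * C < V * (8*μ*C + 1) := by
      have e1 : (V+1) * (2*μ-1) ≤ (2*V) * (2*μ) := Nat.mul_le_mul (by omega) (by omega)
      have e2 : (2*V)*(2*μ)*C < V * (8*μ*C+1) := by
        have hx : 0 ≤ V*μ*C := Nat.zero_le _
        calc (2*V)*(2*μ)*C = 4*(V*μ*C) := by ring
          _ < 8*(V*μ*C) + V := by omega
          _ = V * (8*μ*C+1) := by ring
      calc ((V+1) * (2*μ-1)) * C ≤ (2*V)*(2*μ)*C := Nat.mul_le_mul_right _ e1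
        _ < V * (8*μ*C+1) := e2
    have chain : (X * ((V+1) * (2*μ-1))) * C < (s*m).factorial * C := by
      calc (X * ((V+1) * (2*μ-1))) * C = X * (((V+1) * (2*μ-1)) * C) := by ring
        _ < X * (V * (8*μ*C+1)) := by
            exact mul_lt_mul_of_pos_left hmid hXpos
        _ ≤ X * (V * 2^m) := Nat.mul_le_mul_left _ (Nat.mul_le_mul_left _ h2m)
        _ = X * V * 2^m := by ring
        _ ≤ (s*m).factorial * C := hmain
    exact Nat.lt_of_mul_lt_mul_right chain
  -- Step 2 : the finset of permuted words
  set T : Finset (List ℕ) :=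
    Finset.univ.image (fun σ : Equiv.Perm (Fin (s*m)) => wordOf s m σ) with hT
  have hTmem : ∀ u ∈ T, u.Perm (eqWord s m) := by
    intro u hu
    rw [hT, Finset.mem_image] at hu
    obtain ⟨σ, _, rfl⟩ := hu
    exact wordOf_perm s m hm σ
  have hTcard : (s*m).factorial ≤ X * T.card := by
    have := Finset.card_le_mul_card_image (f := fun σ : Equiv.Perm (Fin (s*m)) => wordOf s m σ)
      Finset.univ (X) ?_
    · calc (s*m).factorial = Fintype.card (Equiv.Perm (Fin (s*m))) := by
            rw [Fintype.card_perm, Fintype.card_fin]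
        _ = (Finset.univ : Finset (Equiv.Perm (Fin (s*m)))).card := by
            rw [Finset.card_univ]
        _ ≤ X * T.card := this
    · intro b hb
      rw [Finset.mem_image] at hb
      obtain ⟨σ₀, _, rfl⟩ := hb
      exact fiber_card hm σ₀
  -- Step 3 : pigeonhole on continuant values
  have hmaps : ∀ u ∈ T, K u ∈ Finset.range (V+1) := by
    intro u hu
    rw [Finset.mem_range, Nat.lt_succ_iff]
    calc K u ≤ (u.map (· + 1)).prod := K_le_prod u
      _ = ((eqWord s m).map (· + 1)).prod := ((hTmem u hu).map (· + 1)).prod_eq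
      _ = V := eqWord_prod s m
  have hlt : (Finset.range (V+1)).card * (2*μ-1) < T.card := by
    rw [Finset.card_range]
    have : X * ((V+1) * (2*μ-1)) < X * T.card := lt_of_lt_of_le hcount hTcard
    exact Nat.lt_of_mul_lt_mul_left this
  obtain ⟨v, _, hv⟩ := Finset.exists_lt_card_fiber_of_mul_lt_card_of_maps_to hmaps hlt
  set Φ : Finset (List ℕ) := T.filter (fun u => K u = v) with hΦ
  have hΦcard : 2*μ ≤ Φ.card := by omega
  have hΦne : Φ.Nonempty := Finset.card_pos.mp (by omega)
  obtain ⟨w, hwΦ⟩ := hΦne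
  have hwT : w ∈ T := (Finset.mem_filter.mp hwΦ).1
  have hwK : K w = v := (Finset.mem_filter.mp hwΦ).2
  have hwperm : w.Perm (eqWord s m) := hTmem w hwT
  refine ⟨w, hwperm, ?_⟩
  -- Step 4 : at least μ classes
  set g : List ℕ → Finset (List ℕ) := fun u => ({u, u.reverse} : Finset (List ℕ)) with hg
  have himg : Φ.image g ⊆ (classes w).filter (fun c => ∃ u ∈ c, K u = K w) := by
    intro c hc
    rw [Finset.mem_image] at hc
    obtain ⟨u, hu, rfl⟩ := hc
    have huT : u ∈ T := (Finset.mem_filter.mp hu).1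
    have huK : K u = v := (Finset.mem_filter.mp hu).2
    rw [Finset.mem_filter]
    constructor
    · apply Finset.mem_image_of_mem
      rw [List.mem_toFinset, List.mem_permutations]
      exact (hTmem u huT).trans hwperm.symm
    · exact ⟨u, Finset.mem_insert_self _ _, by rw [huK, hwK]⟩
  have hfib : Φ.card ≤ 2 * (Φ.image g).card := by
    apply Finset.card_le_mul_card_image
    intro b hb
    rw [Finset.mem_image] at hb
    obtain ⟨u₀, _, rfl⟩ := hb
    have hsub : Φ.filter (fun u => g u = g u₀) ⊆ ({u₀, u₀.reverse} : Finset (List ℕ)) := by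
      intro u hu
      have h1 : g u = g u₀ := (Finset.mem_filter.mp hu).2
      have h2 : u ∈ g u := Finset.mem_insert_self _ _
      rwa [h1] at h2
    calc (Φ.filter (fun u => g u = g u₀)).card ≤ ({u₀, u₀.reverse} : Finset (List ℕ)).card :=
          Finset.card_le_card hsub
      _ ≤ 2 := by
          apply le_trans (Finset.card_insert_le _ _)
          simp
  have : 2*μ ≤ 2 * (((classes w).filter (fun c => ∃ u ∈ c, K u = K w)).card) := by
    calc 2*μ ≤ Φ.card := hΦcard
      _ ≤ 2 * (Φ.image g).card := hfib
      _ ≤ 2 * (((classes w).filter (fun c => ∃ u ∈ c, K u = K w)).card) := by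
          exact Nat.mul_le_mul_left _ (Finset.card_le_card himg)
  unfold mult
  omega
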